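/- Let H be Hermitian and {L_n} a finite family of d×d complex matrices, and define the Lindblad generator L(ρ) = −i[H,ρ] + ∑_n (L_n ρ L_n† − (1/2){L_n† L_n, ρ}) and its adjoint L†(A) = i[H,A] + ∑_n (L_n† A L_n − (1/2){L_n† L_n, A}). Let G be a positive-definite Hermitian matrix and Ġ a Hermitian matrix satisfying G Ġ + Ġ G = L(G²). Define L̃_n = G L_n† G^{-1} and H̃ = −(1/2) M − (1/2) M†, where M = G H G^{-1} + i Ġ G^{-1} + (i/2) ∑_n G L_n† L_n G^{-1}. Then for every d×d matrix ρ: G L†(G^{-1} ρ G^{-1}) G − (Ġ G^{-1} ρ + ρ G^{-1} Ġ) = −i[H̃,ρ] + ∑_n (L̃_n ρ L̃_n† − (1/2){L̃_n† L̃_n, ρ}). (This identity says that the Petz recovery map of an infinitesimal Lindblad evolution, with time-dependent reference state γ_t = G² obeying dγ_t/dt = L(γ_t), is again generated by a Lindblad equation with Hamiltonian H̃ and jump operators L̃_n.) -/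
import Mathlib


open Matrix
open scoped ComplexOrder

/-- The Lindblad generator L(ρ) = −i[H,ρ] + ∑ n (Lₙ ρ Lₙ† − ½{Lₙ†Lₙ, ρ}). -/
noncomputable def lindblad {d : ℕ} {ι : Type} [Fintype ι]
    (H : Matrix (Fin d) (Fin d) ℂ) (L : ι → Matrix (Fin d) (Fin d) ℂ)
    (ρ : Matrix (Fin d) (Fin d) ℂ) : Matrix (Fin d) (Fin d) ℂ :=
  (-Complex.I) • (H * ρ - ρ * H) +
    ∑ n, (L n * ρ * (L n)ᴴ - (1/2 : ℂ) • ((L n)ᴴ * L n * ρ + ρ * ((L n)ᴴ * L n)))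

/-- The adjoint Lindblad generator L†(A) = i[H,A] + ∑ n (Lₙ† A Lₙ − ½{Lₙ†Lₙ, A}). -/
noncomputable def lindbladAdj {d : ℕ} {ι : Type} [Fintype ι]
    (H : Matrix (Fin d) (Fin d) ℂ) (L : ι → Matrix (Fin d) (Fin d) ℂ)
    (A : Matrix (Fin d) (Fin d) ℂ) : Matrix (Fin d) (Fin d) ℂ :=
  Complex.I • (H * A - A * H) +
    ∑ n, ((L n)ᴴ * A * L n - (1/2 : ℂ) • ((L n)ᴴ * L n * A + A * ((L n)ᴴ * L n)))

/-- the Petz-recovered infinitesimal Lindblad evolution is again a Lindblad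
generator, with reversed Hamiltonian H̃ = −½M − ½M† (where
M = G H G⁻¹ + i Ġ G⁻¹ + (i/2) ∑ₙ G Lₙ† Lₙ G⁻¹) and jump operators L̃ₙ = G Lₙ† G⁻¹. -/
theorem petz_recovery_of_lindblad_is_lindblad
    {d : ℕ} {ι : Type} [Fintype ι]
    (H : Matrix (Fin d) (Fin d) ℂ) (hH : H.IsHermitian)
    (L : ι → Matrix (Fin d) (Fin d) ℂ)
    (G Gdot : Matrix (Fin d) (Fin d) ℂ) (hG : G.PosDef) (hGdot : Gdot.IsHermitian)
    (hGevol : G * Gdot + Gdot * G = lindblad H L (G * G)) :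
    ∀ M Htilde : Matrix (Fin d) (Fin d) ℂ,
      M = G * H * G⁻¹ + Complex.I • (Gdot * G⁻¹) +
            (Complex.I / 2) • ∑ n, G * (L n)ᴴ * L n * G⁻¹ →
      Htilde = (-(1/2) : ℂ) • M + (-(1/2) : ℂ) • Mᴴ →
      ∀ ρ : Matrix (Fin d) (Fin d) ℂ,
        G * lindbladAdj H L (G⁻¹ * ρ * G⁻¹) * G - (Gdot * G⁻¹ * ρ + ρ * (G⁻¹ * Gdot)) =
          (-Complex.I) • (Htilde * ρ - ρ * Htilde) +
            ∑ n, ((G * (L n)ᴴ * G⁻¹) * ρ * (G * (L n)ᴴ * G⁻¹)ᴴ -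
              (1/2 : ℂ) • ((G * (L n)ᴴ * G⁻¹)ᴴ * (G * (L n)ᴴ * G⁻¹) * ρ +
                ρ * ((G * (L n)ᴴ * G⁻¹)ᴴ * (G * (L n)ᴴ * G⁻¹)))) := by
  intro M Htilde hM hHt ρ
  subst hM hHt
  have hdet : IsUnit G.det := (Matrix.isUnit_iff_isUnit_det G).mp hG.isUnit
  have hGS : G * G⁻¹ = 1 := mul_nonsing_inv G hdet
  have hSG : G⁻¹ * G = 1 := nonsing_inv_mul G hdet
  have hSh : (G⁻¹)ᴴ = G⁻¹ := by rw [conjTranspose_nonsing_inv, hG.1.eq]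
  have hc1 : ∀ x : Matrix (Fin d) (Fin d) ℂ, G * (G⁻¹ * x) = x := fun x => by
    rw [← mul_assoc, hGS, one_mul]
  have hc2 : ∀ x : Matrix (Fin d) (Fin d) ℂ, G⁻¹ * (G * x) = x := fun x => by
    rw [← mul_assoc, hSG, one_mul]
  have key : G * Gdot + Gdot * G - lindblad H L (G * G) = 0 := sub_eq_zero.mpr hGevol
  rw [← sub_eq_zero]
  rw [show (0 : Matrix (Fin d) (Fin d) ℂ) =
      (-(1/2):ℂ) • ((G⁻¹ * (G * Gdot + Gdot * G - lindblad H L (G * G)) * G⁻¹) * ρ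
        + ρ * (G⁻¹ * (G * Gdot + Gdot * G - lindblad H L (G * G)) * G⁻¹)) from by
    rw [key]; simp]
  simp only [lindblad, lindbladAdj, conjTranspose_mul, conjTranspose_smul, conjTranspose_add,
    conjTranspose_sub, conjTranspose_conjTranspose, Matrix.conjTranspose_sum, hSh, hG.1.eq,
    hH.eq, hGdot.eq, star_smul, Complex.star_def, map_div₀, Complex.conj_I, map_neg,
    map_ofNat, star_one, _root_.map_one, star_neg, star_div₀,
    mul_add, add_mul, mul_sub, sub_mul, smul_add, smul_sub, smul_smul, neg_smul, smul_neg,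
    Finset.mul_sum, Finset.sum_mul, Finset.smul_sum, Finset.sum_add_distrib,
    Finset.sum_sub_distrib, neg_mul, mul_neg, neg_neg, smul_mul_assoc, mul_smul_comm,
    mul_assoc, hc1, hc2, hGS, hSG, mul_one, one_mul]
  simp only [← neg_smul]
  simp only [← Finset.smul_sum]
  match_scalars <;> ring_nf <;> simp [Complex.I_sq] <;> ring_nf
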